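/- Let H and L be finite-dimensional complex inner product spaces and let S be a unitary operator on H ⊕ L. If ξ, τ, τ' ∈ H and v, v' ∈ L satisfy S(ξ ⊕ v) = τ ⊕ v and S(ξ ⊕ v') = τ' ⊕ v', then τ = τ'. In other words, the transduced vector τ is uniquely determined by S and ξ (although the catalyst v need not be unique). -/

import Mathlib

/-!
A unitary preserves the norm of the difference `(ξ ⊕ v) - (ξ ⊕ v') = 0 ⊕ (v - v')`, whose image is
`(τ - τ') ⊕ (v - v')`. By Pythagoras `‖τ - τ'‖² + ‖v - v'‖² = ‖v - v'‖²`, so `τ = τ'`.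
-/

namespace WithLp

variable {E F : Type*} [NormedAddCommGroup E] [NormedAddCommGroup F]

theorem prod_norm_toLp_eq_norm_snd_iff (x : E) (y : F) :
    ‖toLp 2 (x, y)‖ = ‖y‖ ↔ x = 0 := by
  rw [← sq_eq_sq₀ (norm_nonneg _) (norm_nonneg _), prod_norm_sq_eq_of_L2]
  simp

end WithLp

namespace LinearIsometry

open WithLp

variable {R E F : Type*} [Ring R] [NormedAddCommGroup E] [NormedAddCommGroup F]
  [Module R E] [Module R F]

theorem transduction_unique (S : WithLp 2 (E × F) →ₗᵢ[R] WithLp 2 (E × F))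
    {ξ τ τ' : E} {v v' : F} (h : S (toLp 2 (ξ, v)) = toLp 2 (τ, v))
    (h' : S (toLp 2 (ξ, v')) = toLp 2 (τ', v')) : τ = τ' := by
  have hdiff : S (toLp 2 (0, v - v')) = toLp 2 (τ - τ', v - v') := by
    rw [← sub_self ξ, ← Prod.mk_sub_mk, toLp_sub, map_sub, h, h', ← toLp_sub, Prod.mk_sub_mk]
  have hnorm : ‖toLp 2 (τ - τ', v - v')‖ = ‖v - v'‖ := by
    rw [← hdiff, S.norm_map, norm_toLp_snd]
  exact sub_eq_zero.mp ((prod_norm_toLp_eq_norm_snd_iff _ _).mp hnorm)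

end LinearIsometry

theorem transduction_unique
    {H L : Type*}
    [NormedAddCommGroup H] [InnerProductSpace ℂ H]
    [NormedAddCommGroup L] [InnerProductSpace ℂ L]
    (S : WithLp 2 (H × L) ≃ₗᵢ[ℂ] WithLp 2 (H × L))
    (ξ τ τ' : H) (v v' : L)
    (h : S ((WithLp.equiv 2 (H × L)).symm (ξ, v)) = (WithLp.equiv 2 (H × L)).symm (τ, v))
    (h' : S ((WithLp.equiv 2 (H × L)).symm (ξ, v')) = (WithLp.equiv 2 (H × L)).symm (τ', v')) :
    τ = τ' :=
  S.toLinearIsometry.transduction_unique h h'
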